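/- arXiv:2009.14047 — 5 statements merged into one kernel-verified Lean document; each statement's English description precedes it below -/
import Mathlib

section
/- Let x₁, x₂ ∈ ℝ with 0 ≤ x₁ ⊥ x₂ ≥ 0 (i.e., x₁ ≥ 0, x₂ ≥ 0, x₁x₂ = 0), and let Δ > 0 with 0 ≤ x₁ ≤ Δ and x₂ = 0 (case A). Then for any g₁, g₂ ∈ ℝ, the minimum of g₁d₁ + g₂d₂ over the feasible set F := {(d₁,d₂) : x₁+d₁ ≥ 0, x₂+d₂ ≥ 0, (x₁+d₁)(x₂+d₂) = 0, max(|d₁|,|d₂|) ≤ Δ} is attained at one of the four points (0,0), (Δ,0), (−x₁,0), (−x₁,Δ). -/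
/-!
With `x₂ = 0` the complementarity constraint `(x₁ + d₁) d₂ = 0` splits the feasible set into the
two edges `{(d₁, 0) : -x₁ ≤ d₁ ≤ Δ}` and `{(-x₁, d₂) : 0 ≤ d₂ ≤ Δ}` of the trust region, which
meet at `(-x₁, 0)`. A linear objective on a segment is minimised at an endpoint, so every feasible
value is dominated by one of the listed points, and the best of these finitely many points is a
global minimiser.
-/

open Set

def lpccFeasible (x1 x2 Δ : ℝ) : Set (ℝ × ℝ) :=
  {e | 0 ≤ x1 + e.1 ∧ 0 ≤ x2 + e.2 ∧ (x1 + e.1) * (x2 + e.2) = 0 ∧ max |e.1| |e.2| ≤ Δ}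

theorem mem_lpccFeasible_zero_iff {x1 Δ : ℝ} (h1 : 0 ≤ x1) (hA1 : x1 ≤ Δ) {e : ℝ × ℝ} :
    e ∈ lpccFeasible x1 0 Δ ↔
      (e.2 = 0 ∧ e.1 ∈ Icc (-x1) Δ) ∨ (e.1 = -x1 ∧ e.2 ∈ Icc 0 Δ) := by
  obtain ⟨e1, e2⟩ := e
  simp only [lpccFeasible, mem_ofPred_eq, mem_Icc, zero_add, max_le_iff, abs_le, mul_eq_zero]
  constructor
  · rintro ⟨he1, he2, hc | hc, ⟨-, he1Δ⟩, -, he2Δ⟩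
    · exact Or.inr ⟨by linarith, he2, he2Δ⟩
    · exact Or.inl ⟨hc, by linarith, he1Δ⟩
  · rintro (⟨rfl, he1, he1Δ⟩ | ⟨rfl, he2, he2Δ⟩)
    · exact ⟨by linarith, le_rfl, Or.inr rfl, ⟨by linarith, he1Δ⟩, by linarith, by linarith⟩
    · exact ⟨by linarith, he2, Or.inl (by ring), ⟨by linarith, by linarith⟩, by linarith, he2Δ⟩

theorem min_mul_le_mul_of_mem_Icc {a b t : ℝ} (g : ℝ) (ht : t ∈ Icc a b) :
    min (g * a) (g * b) ≤ g * t :=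
  ((LinearMap.mul ℝ ℝ g).concaveOn convex_univ).min_le_of_mem_Icc trivial trivial ht

theorem exists_mem_forall_le_of_forall_exists_le {α β : Type*} [LinearOrder β] {f : α → β}
    {s F : Set α} (hs : s.Finite) (hne : s.Nonempty) (hsF : s ⊆ F)
    (hdom : ∀ e ∈ F, ∃ c ∈ s, f c ≤ f e) : ∃ d ∈ s, d ∈ F ∧ ∀ e ∈ F, f d ≤ f e := by
  obtain ⟨d, hd, hmin⟩ := exists_min_image s f hs hne
  refine ⟨d, hd, hsF hd, fun e he => ?_⟩
  obtain ⟨c, hc, hce⟩ := hdom e he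
  exact (hmin c hc).trans hce

theorem stmt_2_general (x1 x2 Δ g1 g2 : ℝ) (h1 : 0 ≤ x1)
    (hA1 : x1 ≤ Δ) (hA2 : x2 = 0) :
    ∃ d ∈ ({((0 : ℝ), (0 : ℝ)), (Δ, 0), (-x1, 0), (-x1, Δ)} : Set (ℝ × ℝ)),
      d ∈ {e : ℝ × ℝ | 0 ≤ x1 + e.1 ∧ 0 ≤ x2 + e.2 ∧ (x1 + e.1) * (x2 + e.2) = 0 ∧
              max |e.1| |e.2| ≤ Δ} ∧
      ∀ e ∈ {e : ℝ × ℝ | 0 ≤ x1 + e.1 ∧ 0 ≤ x2 + e.2 ∧ (x1 + e.1) * (x2 + e.2) = 0 ∧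
              max |e.1| |e.2| ≤ Δ},
        g1 * d.1 + g2 * d.2 ≤ g1 * e.1 + g2 * e.2 := by
  subst hA2
  have hΔ_nonneg : 0 ≤ Δ := h1.trans hA1
  have mem_feasible := @mem_lpccFeasible_zero_iff x1 Δ h1 hA1
  refine exists_mem_forall_le_of_forall_exists_le (F := lpccFeasible x1 0 Δ)
    (toFinite _) (insert_nonempty _ _) ?_ ?_
  · rintro c (rfl | rfl | rfl | rfl) <;> rw [mem_feasible]
    · exact Or.inl ⟨rfl, by linarith, hΔ_nonneg⟩
    · exact Or.inl ⟨rfl, by linarith, le_rfl⟩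
    · exact Or.inl ⟨rfl, le_rfl, by linarith⟩
    · exact Or.inr ⟨rfl, hΔ_nonneg, le_rfl⟩
  · rintro ⟨e1, e2⟩ he
    rcases mem_feasible.mp he with ⟨rfl, he1⟩ | ⟨rfl, he2⟩
    · rcases min_le_iff.mp (min_mul_le_mul_of_mem_Icc g1 he1) with h | h
      · exact ⟨(-x1, 0), by simp, by simpa using h⟩
      · exact ⟨(Δ, 0), by simp, by simpa using h⟩
    · rcases min_le_iff.mp (min_mul_le_mul_of_mem_Icc g2 he2) with h | h
      · exact ⟨(-x1, 0), by simp, by simpa using h⟩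
      · exact ⟨(-x1, Δ), by simp, by simpa using h⟩

/-- Case A of the 2D trust-region LPCC: the minimum is attained at one of four points. -/
theorem stmt_2 (x1 x2 Δ g1 g2 : ℝ) (h1 : 0 ≤ x1) (h2 : 0 ≤ x2) (hc : x1 * x2 = 0)
    (hΔ : 0 < Δ) (hA1 : x1 ≤ Δ) (hA2 : x2 = 0) :
    ∃ d ∈ ({((0 : ℝ), (0 : ℝ)), (Δ, 0), (-x1, 0), (-x1, Δ)} : Set (ℝ × ℝ)),
      d ∈ {e : ℝ × ℝ | 0 ≤ x1 + e.1 ∧ 0 ≤ x2 + e.2 ∧ (x1 + e.1) * (x2 + e.2) = 0 ∧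
              max |e.1| |e.2| ≤ Δ} ∧
      ∀ e ∈ {e : ℝ × ℝ | 0 ≤ x1 + e.1 ∧ 0 ≤ x2 + e.2 ∧ (x1 + e.1) * (x2 + e.2) = 0 ∧
              max |e.1| |e.2| ≤ Δ},
        g1 * d.1 + g2 * d.2 ≤ g1 * e.1 + g2 * e.2 :=
  stmt_2_general x1 x2 Δ g1 g2 h1 hA1 hA2
end

section
/- Let f : ℝⁿ → ℝ be differentiable with ∇f Lipschitz continuous with constant M on an open convex set containing the segment [y, y+d]. Then f(y) − f(y + d) ≥ −∇f(y)ᵀd − (M/2)‖d‖²_∞, where the Lipschitz property is taken as ‖∇f(u) − ∇f(v)‖₁ ≤ M‖u − v‖_∞. -/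
/-!
Along the segment, `φ t = f (y + t • d)` has derivative `∑ i, g (y + t • d) i * d i`, which by
Hölder's inequality (`ℓ₁` against `ℓ∞`) and the Lipschitz bound exceeds its value at `t = 0` by at
most `M t ‖d‖²`. Hence `φ t - t ∇f(y)ᵀd - (M/2) t² ‖d‖²` is antitone on `[0, 1]`, and comparing
its values at `0` and `1` gives the estimate.
-/

open Set

theorem sub_le_of_hasDerivAt_le_add_mul {φ φ' : ℝ → ℝ} {a b : ℝ}
    (hφ : ∀ t ∈ Icc (0 : ℝ) 1, HasDerivAt φ (φ' t) t)
    (hle : ∀ t ∈ Icc (0 : ℝ) 1, φ' t ≤ a + b * t) :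
    φ 1 - φ 0 ≤ a + b / 2 := by
  set ψ : ℝ → ℝ := fun t => φ t - a * t - b / 2 * t ^ 2
  have hψ : ∀ t ∈ Icc (0 : ℝ) 1, HasDerivAt ψ (φ' t - a - b * t) t := fun t ht => by
    refine (((hφ t ht).sub ((hasDerivAt_id' t).const_mul a)).sub
      ((hasDerivAt_pow 2 t).const_mul (b / 2))).congr_deriv ?_
    push_cast
    ring
  have hanti : AntitoneOn ψ (Icc 0 1) :=
    antitoneOn_of_hasDerivWithinAt_nonpos (convex_Icc 0 1)
      (fun t ht => (hψ t ht).continuousAt.continuousWithinAt)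
      (fun t ht => (hψ t (interior_subset ht)).hasDerivWithinAt)
      (fun t ht => by linarith [hle t (interior_subset ht)])
  have hends := hanti (left_mem_Icc.2 zero_le_one) (right_mem_Icc.2 zero_le_one) zero_le_one
  simp only [ψ] at hends
  linarith

theorem sum_mul_le_sum_abs_mul_norm {ι : Type*} [Fintype ι] (u v : ι → ℝ) :
    ∑ i, u i * v i ≤ (∑ i, |u i|) * ‖v‖ := by
  rw [Finset.sum_mul]
  refine Finset.sum_le_sum fun i _ => ?_
  calc u i * v i ≤ |u i| * |v i| := by rw [← abs_mul]; exact le_abs_self _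
    _ ≤ |u i| * ‖v‖ := by gcongr; exact norm_le_pi_norm v i

theorem hasDerivAt_comp_add_smul_of_hasFDerivAt_sum_smul_proj {ι : Type*} [Fintype ι]
    {f : (ι → ℝ) → ℝ} {c y d : ι → ℝ} {t : ℝ}
    (hf : HasFDerivAt f (∑ i, c i • (ContinuousLinearMap.proj i : (ι → ℝ) →L[ℝ] ℝ)) (y + t • d)) :
    HasDerivAt (fun s : ℝ => f (y + s • d)) (∑ i, c i * d i) t := by
  have hline : HasDerivAt (fun s : ℝ => y + s • d) d t := by
    simpa using ((hasDerivAt_id t).smul_const d).const_add y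
  refine (hf.comp_hasDerivAt t hline).congr_deriv ?_
  simp

theorem stmt_5_general (n : ℕ) (f : (Fin n → ℝ) → ℝ) (g : (Fin n → ℝ) → (Fin n → ℝ))
    (U : Set (Fin n → ℝ))
    (y d : Fin n → ℝ) (hseg : segment ℝ y (y + d) ⊆ U) (M : ℝ)
    (hderiv : ∀ z ∈ U, HasFDerivAt f
      (∑ i, g z i • (ContinuousLinearMap.proj i : (Fin n → ℝ) →L[ℝ] ℝ)) z)
    (hLip : ∀ a ∈ U, ∀ b ∈ U, ∑ i, |g a i - g b i| ≤ M * ‖a - b‖) :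
    f y - f (y + d) ≥ -(∑ i, g y i * d i) - M / 2 * ‖d‖ ^ 2 := by
  have hmem : ∀ t ∈ Icc (0 : ℝ) 1, y + t • d ∈ U := fun t ht =>
    hseg ((segment_eq_image' ℝ y (y + d)).symm ▸ ⟨t, ht, by simp⟩)
  have hslope : ∀ t ∈ Icc (0 : ℝ) 1,
      ∑ i, g (y + t • d) i * d i ≤ ∑ i, g y i * d i + M * ‖d‖ ^ 2 * t := fun t ht => by
    have hgap := calc
      ∑ i, (g (y + t • d) i - g y i) * d i
          ≤ (∑ i, |g (y + t • d) i - g y i|) * ‖d‖ := sum_mul_le_sum_abs_mul_norm _ _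
      _ ≤ M * ‖y + t • d - y‖ * ‖d‖ := by
          gcongr; exact hLip _ (hmem t ht) _ (hseg (left_mem_segment ℝ y (y + d)))
      _ = M * ‖d‖ ^ 2 * t := by
          rw [add_sub_cancel_left, norm_smul, Real.norm_of_nonneg ht.1]; ring
    simp only [sub_mul, Finset.sum_sub_distrib] at hgap
    linarith
  have hrise := sub_le_of_hasDerivAt_le_add_mul
    (fun t ht => hasDerivAt_comp_add_smul_of_hasFDerivAt_sum_smul_proj (hderiv _ (hmem t ht)))
    hslope
  simp only [one_smul, zero_smul, add_zero] at hrise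
  linarith

/-- Descent estimate (Lemma 4.4): with an `ℓ₁`–`ℓ∞` Lipschitz gradient with constant `M`
on an open convex set containing the segment `[y, y + d]`,
`f(y) − f(y+d) ≥ −∇f(y)ᵀd − (M/2)‖d‖²_∞`. -/
theorem stmt_5 (n : ℕ) (f : (Fin n → ℝ) → ℝ) (g : (Fin n → ℝ) → (Fin n → ℝ))
    (U : Set (Fin n → ℝ)) (hU : IsOpen U) (hconv : Convex ℝ U)
    (y d : Fin n → ℝ) (hseg : segment ℝ y (y + d) ⊆ U) (M : ℝ)
    (hderiv : ∀ z ∈ U, HasFDerivAt f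
      (∑ i, g z i • (ContinuousLinearMap.proj i : (Fin n → ℝ) →L[ℝ] ℝ)) z)
    (hLip : ∀ a ∈ U, ∀ b ∈ U, ∑ i, |g a i - g b i| ≤ M * ‖a - b‖) :
    f y - f (y + d) ≥ -(∑ i, g y i * d i) - M / 2 * ‖d‖ ^ 2 :=
  stmt_5_general n f g U y d hseg M hderiv hLip
end

section
/- Let f : ℝⁿ → ℝ be differentiable, let g = ∇f(x) at a point x, let s ∈ ℝⁿ with ‖s‖_∞ = 1 and gᵀs ≤ −ε for some ε > 0, and let p ∈ ℝⁿ with ‖p‖_∞ = δ. If σ ∈ (0,1) and δ ≤ κε/(2‖g‖₁) for some κ > 0, then for d = κs + p one has −σgᵀd ≥ (1/2)σεκ. -/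
/-!
Hölder's inequality for the `ℓ¹`/`ℓ^∞` pairing bounds the perturbation term by
`|gᵀp| ≤ ‖g‖₁ δ ≤ κε/2`, which eats at most half of the decrease `κ gᵀs ≤ -κε`.
-/

open Matrix

section DotProduct

variable {ι : Type*} [Fintype ι]

theorem abs_dotProduct_le_sum_abs_mul_norm (g p : ι → ℝ) :
    |g ⬝ᵥ p| ≤ (∑ i, |g i|) * ‖p‖ :=
  calc |g ⬝ᵥ p| ≤ ∑ i, |g i * p i| := Finset.abs_sum_le_sum_abs _ _
    _ ≤ ∑ i, |g i| * ‖p‖ := Finset.sum_le_sum fun i _ => by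
        rw [abs_mul]
        exact mul_le_mul_of_nonneg_left (norm_le_pi_norm p i) (abs_nonneg _)
    _ = (∑ i, |g i|) * ‖p‖ := (Finset.sum_mul _ _ _).symm

theorem sum_abs_pos_of_dotProduct_neg {g s : ι → ℝ} (h : g ⬝ᵥ s < 0) : 0 < ∑ i, |g i| := by
  have : 0 < (∑ i, |g i|) * ‖s‖ :=
    (neg_pos.mpr h).trans_le ((neg_le_abs _).trans (abs_dotProduct_le_sum_abs_mul_norm g s))
  exact pos_of_mul_pos_left this (norm_nonneg s)

theorem dotProduct_smul_add_le {g s p : ι → ℝ} {ε κ : ℝ} (hgs : g ⬝ᵥ s ≤ -ε) (hε : 0 < ε)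
    (hκ : 0 ≤ κ) (hp : ‖p‖ ≤ κ * ε / (2 * ∑ i, |g i|)) :
    g ⬝ᵥ (κ • s + p) ≤ -(κ * ε / 2) := by
  have hG : 0 < ∑ i, |g i| := sum_abs_pos_of_dotProduct_neg (hgs.trans_lt (neg_neg_of_pos hε))
  have hgp : g ⬝ᵥ p ≤ κ * ε / 2 :=
    calc g ⬝ᵥ p ≤ (∑ i, |g i|) * ‖p‖ :=
          (le_abs_self _).trans (abs_dotProduct_le_sum_abs_mul_norm g p)
      _ ≤ κ * ε / 2 := by
        rw [le_div_iff₀ (by positivity)] at hp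
        linarith
  rw [dotProduct_add, dotProduct_smul, smul_eq_mul]
  linarith [mul_le_mul_of_nonneg_left hgs hκ]

end DotProduct

theorem stmt_12_general (n : ℕ) (g s p : Fin n → ℝ) (ε κ δ σ : ℝ)
    (hgs : ∑ i, g i * s i ≤ -ε) (hε : 0 < ε)
    (hp : ‖p‖ = δ) (hσ0 : 0 < σ) (hκ : 0 < κ)
    (hδ : δ ≤ κ * ε / (2 * ∑ i, |g i|)) :
    -σ * ∑ i, g i * (κ * s i + p i) ≥ 1 / 2 * σ * ε * κ := by
  have hd : g ⬝ᵥ (κ • s + p) ≤ -(κ * ε / 2) :=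
    dotProduct_smul_add_le hgs hε hκ.le (hp ▸ hδ)
  change 1 / 2 * σ * ε * κ ≤ -σ * (g ⬝ᵥ (κ • s + p))
  linarith [mul_le_mul_of_nonneg_left hd hσ0.le]

/-- Key inequality of Theorem 4.2's proof: for `d = κs + p` with `gᵀs ≤ −ε`,
`‖s‖_∞ = 1`, `‖p‖_∞ = δ` and `δ ≤ κε/(2‖g‖₁)`, one has `−σgᵀd ≥ σεκ/2`. -/
theorem stmt_12 (n : ℕ) (g s p : Fin n → ℝ) (ε κ δ σ : ℝ)
    (hs : ‖s‖ = 1) (hgs : ∑ i, g i * s i ≤ -ε) (hε : 0 < ε)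
    (hp : ‖p‖ = δ) (hσ0 : 0 < σ) (hσ1 : σ < 1) (hκ : 0 < κ)
    (hδ : δ ≤ κ * ε / (2 * ∑ i, |g i|)) :
    -σ * ∑ i, g i * (κ * s i + p i) ≥ 1 / 2 * σ * ε * κ :=
  stmt_12_general n g s p ε κ δ σ hgs hε hp hσ0 hκ hδ
end

section
/- Let f : ℝⁿ → ℝ be continuously differentiable, σ ∈ (0,1), and suppose at iterate x^k (feasible, not B-stationary) there exist s ∈ ℝⁿ, ‖s‖_∞ = 1, with ∇f(x^k)ᵀs ≤ −ε for ε > 0, such that Δs is feasible for LPCC(x^k, Δ). If ∇f is Lipschitz (ℓ₁–ℓ∞) with constant M near x^k and d^{k,l} solves LPCC(x^k, Δ^{k,l}), then whenever Δ^{k,l} ≤ 2(1−σ)ε/M the acceptance test f(x^k) − f(x^k + d^{k,l}) ≥ −σ∇f(x^k)ᵀd^{k,l} is satisfied. Consequently the inner loop, which halves Δ^{k,l}, terminates after finitely many iterations. -/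
/-!
The LPCC step is at least as good as the feasible direction `Δ • s`, so its linear decrease
`-∇f(x)ᵀd` is at least `εΔ`. A Lipschitz gradient bounds the error of the linear model by
`(M/2)‖d‖² ≤ (M/2)Δ²`, and for `Δ ≤ 2(1-σ)ε/M` this is at most a `(1-σ)` fraction of the
linear decrease. Halving the radius reaches this threshold after finitely many steps.
-/

open Set Metric

theorem Convex.norm_sub_sub_fderiv_le_of_norm_sub_fderiv_le
    {E F : Type*} [NormedAddCommGroup E] [NormedSpace ℝ E]
    [NormedAddCommGroup F] [NormedSpace ℝ F]
    {f : E → F} {f' : E → E →L[ℝ] F} {s : Set E} {x y : E} {L : ℝ}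
    (hs : Convex ℝ s) (hx : x ∈ s) (hy : y ∈ s)
    (hf : ∀ z ∈ s, HasFDerivAt f (f' z) z)
    (hL : ∀ z ∈ s, ‖f' z - f' x‖ ≤ L * ‖z - x‖) :
    ‖f y - f x - f' x (y - x)‖ ≤ L / 2 * ‖y - x‖ ^ 2 := by
  set v := y - x
  have hseg : ∀ t ∈ Icc (0 : ℝ) 1, x + t • v ∈ s := fun t ht => by
    simpa [v, add_sub_cancel] using hs.add_smul_sub_mem hx hy ht
  set φ : ℝ → F := fun t => f (x + t • v) - f x - t • f' x v
  have hφ : ∀ t ∈ Icc (0 : ℝ) 1, HasDerivAt φ (f' (x + t • v) v - f' x v) t := by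
    intro t ht
    have hline : HasDerivAt (fun t : ℝ => x + t • v) v t := by
      simpa using ((hasDerivAt_id t).smul_const v).const_add x
    exact ((((hf _ (hseg t ht)).comp_hasDerivAt t hline).sub_const (f x)).sub
      ((hasDerivAt_id' t).smul_const (f' x v))).congr_deriv (by rw [one_smul])
  have hbound : ∀ t ∈ Ico (0 : ℝ) 1, ‖f' (x + t • v) v - f' x v‖ ≤ L * ‖v‖ ^ 2 * t := by
    intro t ht
    calc ‖f' (x + t • v) v - f' x v‖ = ‖(f' (x + t • v) - f' x) v‖ := rfl
      _ ≤ ‖f' (x + t • v) - f' x‖ * ‖v‖ := (f' (x + t • v) - f' x).le_opNorm v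
      _ ≤ L * ‖(x + t • v) - x‖ * ‖v‖ := by
          gcongr; exact hL _ (hseg t (Ico_subset_Icc_self ht))
      _ = L * ‖v‖ ^ 2 * t := by
          rw [add_sub_cancel_left, norm_smul, Real.norm_of_nonneg ht.1]; ring
  have hB : ∀ t : ℝ, HasDerivAt (fun t : ℝ => L / 2 * ‖v‖ ^ 2 * t ^ 2) (L * ‖v‖ ^ 2 * t) t :=
    fun t => ((hasDerivAt_pow 2 t).const_mul (L / 2 * ‖v‖ ^ 2)).congr_deriv (by ring)
  have hfence := image_norm_le_of_norm_deriv_right_le_deriv_boundary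
    (fun t ht => (hφ t ht).continuousAt.continuousWithinAt)
    (fun t ht => (hφ t (Ico_subset_Icc_self ht)).hasDerivWithinAt)
    (by simp [φ]) hB hbound (right_mem_Icc.2 zero_le_one)
  simpa [φ, v] using hfence

section CoordinateGradient

variable {ι : Type*} [Fintype ι]

theorem sum_smul_proj_apply (a v : ι → ℝ) :
    (∑ i, a i • (ContinuousLinearMap.proj i : (ι → ℝ) →L[ℝ] ℝ)) v = ∑ i, a i * v i := by
  simp

theorem norm_sum_smul_proj_le (a : ι → ℝ) :
    ‖∑ i, a i • (ContinuousLinearMap.proj i : (ι → ℝ) →L[ℝ] ℝ)‖ ≤ ∑ i, |a i| := by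
  refine ContinuousLinearMap.opNorm_le_bound _ (by positivity) fun v => ?_
  rw [sum_smul_proj_apply, Real.norm_eq_abs, Finset.sum_mul]
  refine (Finset.abs_sum_le_sum_abs _ _).trans (Finset.sum_le_sum fun i _ => ?_)
  rw [abs_mul]
  gcongr
  exact norm_le_pi_norm v i

theorem sub_sub_sum_mul_le_of_lipschitz {f : (ι → ℝ) → ℝ} {g : (ι → ℝ) → ι → ℝ}
    {x d : ι → ℝ} {r M : ℝ}
    (hf : ∀ z, ‖z - x‖ ≤ r →
      HasFDerivAt f (∑ i, g z i • (ContinuousLinearMap.proj i : (ι → ℝ) →L[ℝ] ℝ)) z)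
    (hg : ∀ a b, ‖a - x‖ ≤ r → ‖b - x‖ ≤ r → ∑ i, |g a i - g b i| ≤ M * ‖a - b‖)
    (hd : ‖d‖ ≤ r) :
    f (x + d) - f x - ∑ i, g x i * d i ≤ M / 2 * ‖d‖ ^ 2 := by
  have hx : x ∈ closedBall x r := mem_closedBall_self ((norm_nonneg d).trans hd)
  have hxd : x + d ∈ closedBall x r := by simpa [mem_closedBall, dist_eq_norm] using hd
  have key := (convex_closedBall x r).norm_sub_sub_fderiv_le_of_norm_sub_fderiv_le hx hxd
    (fun z hz => hf z (mem_closedBall_iff_norm.1 hz)) fun z hz => by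
      rw [← Finset.sum_sub_distrib]
      simp_rw [← sub_smul]
      exact (norm_sum_smul_proj_le _).trans
        (hg z x (mem_closedBall_iff_norm.1 hz) (mem_closedBall_iff_norm.1 hx))
  rw [add_sub_cancel_left, sum_smul_proj_apply, Real.norm_eq_abs] at key
  exact (le_abs_self _).trans key

end CoordinateGradient

theorem sufficient_decrease_of_radius_le {f₀ f₁ slope r Δ σ ε M : ℝ}
    (hσ : σ < 1) (hM : 0 < M) (hr : 0 ≤ r) (hrΔ : r ≤ Δ) (hslope : slope ≤ -ε * Δ)
    (hΔ : Δ ≤ 2 * (1 - σ) * ε / M) (hmodel : f₁ - f₀ - slope ≤ M / 2 * r ^ 2) :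
    f₀ - f₁ ≥ -σ * slope := by
  rw [le_div_iff₀ hM] at hΔ
  have hr2 : M / 2 * r ^ 2 ≤ M / 2 * Δ ^ 2 := by gcongr
  nlinarith

theorem exists_div_two_pow_le (a : ℝ) {c : ℝ} (hc : 0 < c) : ∃ l : ℕ, a / 2 ^ l ≤ c := by
  obtain ⟨l, hl⟩ := pow_unbounded_of_one_lt (a / c) (one_lt_two (α := ℝ))
  refine ⟨l, ?_⟩
  rw [div_lt_iff₀ hc] at hl
  rw [div_le_iff₀ (by positivity)]
  linarith

theorem stmt_14_general (n : ℕ) (f : (Fin n → ℝ) → ℝ) (g : (Fin n → ℝ) → (Fin n → ℝ))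
    (C : Set (Fin n → ℝ)) (x : Fin n → ℝ)
    (σ ε M Δ0 : ℝ) (hσ1 : σ < 1) (hε : 0 < ε) (hM : 0 < M)
    (hΔ0 : 0 < Δ0) (Δl : ℕ → ℝ) (hΔl : ∀ l, Δl l = Δ0 / 2 ^ l)
    (s : Fin n → ℝ) (hs : ‖s‖ = 1) (hgs : ∑ i, g x i * s i ≤ -ε)
    (hsfeas : ∀ Δ : ℝ, 0 < Δ → Δ ≤ Δ0 → Δ • s ∈ C)
    (hderiv : ∀ z : Fin n → ℝ, ‖z - x‖ ≤ Δ0 → HasFDerivAt f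
      (∑ i, g z i • (ContinuousLinearMap.proj i : (Fin n → ℝ) →L[ℝ] ℝ)) z)
    (hLip : ∀ a b : Fin n → ℝ, ‖a - x‖ ≤ Δ0 → ‖b - x‖ ≤ Δ0 →
      ∑ i, |g a i - g b i| ≤ M * ‖a - b‖)
    (d : ℕ → Fin n → ℝ)
    (hsol : ∀ l, d l ∈ C ∧ ‖d l‖ ≤ Δl l ∧
      ∀ e ∈ C, ‖e‖ ≤ Δl l → ∑ i, g x i * d l i ≤ ∑ i, g x i * e i) :
    (∀ l, Δl l ≤ 2 * (1 - σ) * ε / M →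
      f x - f (x + d l) ≥ -σ * ∑ i, g x i * d l i) ∧
    ∃ l, f x - f (x + d l) ≥ -σ * ∑ i, g x i * d l i := by
  have hΔpos : ∀ l, 0 < Δl l := fun l => by rw [hΔl]; positivity
  have hΔle : ∀ l, Δl l ≤ Δ0 := fun l => by
    rw [hΔl]; exact div_le_self hΔ0.le (one_le_pow₀ one_le_two)
  have accept : ∀ l, Δl l ≤ 2 * (1 - σ) * ε / M →
      f x - f (x + d l) ≥ -σ * ∑ i, g x i * d l i := by
    intro l hl
    obtain ⟨-, hdl, hopt⟩ := hsol l
    have hslope : ∑ i, g x i * d l i ≤ -ε * Δl l := by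
      have hnorm : ‖Δl l • s‖ ≤ Δl l := by
        rw [norm_smul, hs, mul_one, Real.norm_of_nonneg (hΔpos l).le]
      calc ∑ i, g x i * d l i ≤ ∑ i, g x i * (Δl l • s) i :=
            hopt _ (hsfeas _ (hΔpos l) (hΔle l)) hnorm
        _ = Δl l * ∑ i, g x i * s i := by
            rw [Finset.mul_sum]
            exact Finset.sum_congr rfl fun i _ => by rw [Pi.smul_apply, smul_eq_mul]; ring
        _ ≤ -ε * Δl l := by nlinarith [hΔpos l]
    exact sufficient_decrease_of_radius_le hσ1 hM (norm_nonneg _) hdl hslope hl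
      (sub_sub_sum_mul_le_of_lipschitz hderiv hLip (hdl.trans (hΔle l)))
  obtain ⟨l, hl⟩ := exists_div_two_pow_le Δ0 (show 0 < 2 * (1 - σ) * ε / M by
    have : 0 < 1 - σ := by linarith
    positivity)
  exact ⟨accept, l, accept l (by rwa [hΔl])⟩

/-- Lemma 4.5: if `Δˡ ≤ 2(1−σ)ε/M` then the LPCC step satisfies the acceptance
test; consequently the inner loop, which halves the radius, terminates finitely. -/
theorem stmt_14 (n : ℕ) (f : (Fin n → ℝ) → ℝ) (g : (Fin n → ℝ) → (Fin n → ℝ))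
    (C : Set (Fin n → ℝ)) (x : Fin n → ℝ) (hx0 : (0 : Fin n → ℝ) ∈ C)
    (σ ε M Δ0 : ℝ) (hσ0 : 0 < σ) (hσ1 : σ < 1) (hε : 0 < ε) (hM : 0 < M)
    (hΔ0 : 0 < Δ0) (Δl : ℕ → ℝ) (hΔl : ∀ l, Δl l = Δ0 / 2 ^ l)
    (s : Fin n → ℝ) (hs : ‖s‖ = 1) (hgs : ∑ i, g x i * s i ≤ -ε)
    (hsfeas : ∀ Δ : ℝ, 0 < Δ → Δ ≤ Δ0 → Δ • s ∈ C)
    (hderiv : ∀ z : Fin n → ℝ, ‖z - x‖ ≤ Δ0 → HasFDerivAt f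
      (∑ i, g z i • (ContinuousLinearMap.proj i : (Fin n → ℝ) →L[ℝ] ℝ)) z)
    (hLip : ∀ a b : Fin n → ℝ, ‖a - x‖ ≤ Δ0 → ‖b - x‖ ≤ Δ0 →
      ∑ i, |g a i - g b i| ≤ M * ‖a - b‖)
    (d : ℕ → Fin n → ℝ)
    (hsol : ∀ l, d l ∈ C ∧ ‖d l‖ ≤ Δl l ∧
      ∀ e ∈ C, ‖e‖ ≤ Δl l → ∑ i, g x i * d l i ≤ ∑ i, g x i * e i) :
    (∀ l, Δl l ≤ 2 * (1 - σ) * ε / M →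
      f x - f (x + d l) ≥ -σ * ∑ i, g x i * d l i) ∧
    ∃ l, f x - f (x + d l) ≥ -σ * ∑ i, g x i * d l i :=
  stmt_14_general n f g C x σ ε M Δ0 hσ1 hε hM hΔ0 Δl hΔl s hs hgs hsfeas hderiv hLip d hsol
end

section
/- Let x = (x₀, x₁, x₂) be feasible for the bound-constrained MPCC and suppose there exist ε > 0 and s = (s₀, s₁, s₂) with ‖s‖_∞ = 1 such that ∇f(x)ᵀs ≤ −ε, and s satisfies: s₀ᵢ ≥ 0 whenever x₀ᵢ = ℓ₀ᵢ; s₀ᵢ ≤ 0 whenever x₀ᵢ = u₀ᵢ; s₁ᵢ = 0 whenever x₁ᵢ = 0 and x₂ᵢ > 0; s₂ᵢ = 0 whenever x₂ᵢ = 0 and x₁ᵢ > 0; and for biactive indices (x₁ᵢ = x₂ᵢ = 0), either (s₁ᵢ = 0 and s₂ᵢ ≥ 0) or (s₁ᵢ ≥ 0 and s₂ᵢ = 0). Then there exists t₀ > 0 such that x + ts is feasible for the MPCC for all t ∈ [0, t₀], and consequently x is not B-stationary. -/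
/-!
Each constraint of the MPCC is handled one coordinate at a time. An inactive bound stays
inactive for small `t` by continuity, and the sign conditions keep an active bound satisfied
for all `t ≥ 0`. In every complementarity pair one factor has a zero component with a zero
direction, so the product stays `0`. Because there are finitely many constraints, `x + t • s`
is feasible for all small `t ≥ 0`. Along this curve the linearised objective equals
`t * (∇f(x)ᵀ s) < 0`, which rules out B-stationarity.
-/

open Filter Topology Matrix

namespace MPCC

variable {ι κ : Type*}

def IsFeasible (l u x0 : ι → ℝ) (x1 x2 : κ → ℝ) : Prop :=
  (∀ i, l i ≤ x0 i ∧ x0 i ≤ u i) ∧ (∀ i, 0 ≤ x1 i) ∧ (∀ i, 0 ≤ x2 i) ∧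
    (∀ i, x1 i * x2 i = 0)

/-- `(g0, g1, g2)` plays the role of `∇f(x)`: `d = 0` minimises `∇f(x)ᵀ d` over the feasible
displacements in a sup-norm ball. -/
def IsBStationary [Fintype ι] [Fintype κ] (g0 : ι → ℝ) (g1 g2 : κ → ℝ) (l u x0 : ι → ℝ)
    (x1 x2 : κ → ℝ) : Prop :=
  ∃ Δ, 0 < Δ ∧ ∀ (d0 : ι → ℝ) (d1 d2 : κ → ℝ),
    IsFeasible l u (x0 + d0) (x1 + d1) (x2 + d2) →
    (∀ i, |d0 i| ≤ Δ) → (∀ i, |d1 i| ≤ Δ) → (∀ i, |d2 i| ≤ Δ) →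
    0 ≤ g0 ⬝ᵥ d0 + g1 ⬝ᵥ d1 + g2 ⬝ᵥ d2

section Scalar

variable {a x u s x1 x2 s1 s2 : ℝ}

theorem eventually_le_add_mul (hax : a ≤ x) (hs : x = a → 0 ≤ s) :
    ∀ᶠ t in 𝓝[≥] (0 : ℝ), a ≤ x + t * s := by
  rcases hax.eq_or_lt with rfl | hlt
  · filter_upwards [self_mem_nhdsWithin] with t (ht : 0 ≤ t)
    linarith [mul_nonneg ht (hs rfl)]
  · have hcont : Tendsto (fun t => x + t * s) (𝓝 0) (𝓝 x) := by
      simpa using ((tendsto_id (x := 𝓝 (0 : ℝ))).mul_const s).const_add x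
    exact nhdsWithin_le_nhds ((hcont.eventually_const_lt hlt).mono fun _ => le_of_lt)

theorem eventually_add_mul_le (hxu : x ≤ u) (hs : x = u → s ≤ 0) :
    ∀ᶠ t in 𝓝[≥] (0 : ℝ), x + t * s ≤ u := by
  have := eventually_le_add_mul (neg_le_neg hxu) (fun h => neg_nonneg.2 (hs (neg_inj.1 h)))
  filter_upwards [this] with t ht
  linarith

theorem nonneg_dir_of_active_left (hx2 : 0 ≤ x2) (hs1 : x1 = 0 → 0 < x2 → s1 = 0)
    (hbi : x1 = 0 → x2 = 0 → (s1 = 0 ∧ 0 ≤ s2) ∨ (0 ≤ s1 ∧ s2 = 0)) (h1 : x1 = 0) :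
    0 ≤ s1 := by
  rcases hx2.eq_or_lt with h2 | h2
  · rcases hbi h1 h2.symm with ⟨hs, -⟩ | ⟨hs, -⟩ <;> simp [hs]
  · exact (hs1 h1 h2).ge

theorem nonneg_dir_of_active_right (hx1 : 0 ≤ x1) (hs2 : x2 = 0 → 0 < x1 → s2 = 0)
    (hbi : x1 = 0 → x2 = 0 → (s1 = 0 ∧ 0 ≤ s2) ∨ (0 ≤ s1 ∧ s2 = 0)) (h2 : x2 = 0) :
    0 ≤ s2 :=
  nonneg_dir_of_active_left hx1 hs2 (fun h2 h1 => ((hbi h1 h2).imp And.symm And.symm).symm) h2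

theorem active_dir_of_comp (hx1 : 0 ≤ x1) (hx2 : 0 ≤ x2) (hcomp : x1 * x2 = 0)
    (hs1 : x1 = 0 → 0 < x2 → s1 = 0) (hs2 : x2 = 0 → 0 < x1 → s2 = 0)
    (hbi : x1 = 0 → x2 = 0 → (s1 = 0 ∧ 0 ≤ s2) ∨ (0 ≤ s1 ∧ s2 = 0)) :
    (x1 = 0 ∧ s1 = 0) ∨ (x2 = 0 ∧ s2 = 0) := by
  rcases hx1.eq_or_lt with h1 | h1 <;> rcases hx2.eq_or_lt with h2 | h2
  · rcases hbi h1.symm h2.symm with ⟨hs, -⟩ | ⟨-, hs⟩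
    · exact .inl ⟨h1.symm, hs⟩
    · exact .inr ⟨h2.symm, hs⟩
  · exact .inl ⟨h1.symm, hs1 h1.symm h2⟩
  · exact .inr ⟨h2.symm, hs2 h2.symm h1⟩
  · exact absurd hcomp (mul_pos h1 h2).ne'

theorem add_mul_mul_add_mul_eq_zero (hact : (x1 = 0 ∧ s1 = 0) ∨ (x2 = 0 ∧ s2 = 0)) (t : ℝ) :
    (x1 + t * s1) * (x2 + t * s2) = 0 := by
  rcases hact with ⟨rfl, rfl⟩ | ⟨rfl, rfl⟩ <;> simp

end Scalar

theorem eventually_forall_abs_mul_le [Finite ι] (s : ι → ℝ) {Δ : ℝ} (hΔ : 0 < Δ) :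
    ∀ᶠ t in 𝓝 (0 : ℝ), ∀ i, |t * s i| ≤ Δ := by
  refine eventually_all.2 fun i => ?_
  have hcont : Tendsto (fun t => |t * s i|) (𝓝 0) (𝓝 0) := by
    simpa using ((tendsto_id (x := 𝓝 (0 : ℝ))).mul_const (s i)).abs
  exact hcont.eventually (eventually_le_nhds hΔ)

theorem eventually_isFeasible_add_smul [Finite ι] [Finite κ] {l u x0 s0 : ι → ℝ}
    {x1 x2 s1 s2 : κ → ℝ} (hx : IsFeasible l u x0 x1 x2)
    (hs0l : ∀ i, x0 i = l i → 0 ≤ s0 i) (hs0u : ∀ i, x0 i = u i → s0 i ≤ 0)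
    (hs1 : ∀ i, x1 i = 0 → 0 < x2 i → s1 i = 0) (hs2 : ∀ i, x2 i = 0 → 0 < x1 i → s2 i = 0)
    (hbi : ∀ i, x1 i = 0 → x2 i = 0 → (s1 i = 0 ∧ 0 ≤ s2 i) ∨ (0 ≤ s1 i ∧ s2 i = 0)) :
    ∀ᶠ t in 𝓝[≥] (0 : ℝ), IsFeasible l u (x0 + t • s0) (x1 + t • s1) (x2 + t • s2) := by
  obtain ⟨hb, hx1, hx2, hcomp⟩ := hx
  have hlow := eventually_all.2 fun i => eventually_le_add_mul (hb i).1 (hs0l i)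
  have hup := eventually_all.2 fun i => eventually_add_mul_le (hb i).2 (hs0u i)
  have hnn1 := eventually_all.2 fun i =>
    eventually_le_add_mul (hx1 i) (nonneg_dir_of_active_left (hx2 i) (hs1 i) (hbi i))
  have hnn2 := eventually_all.2 fun i =>
    eventually_le_add_mul (hx2 i) (nonneg_dir_of_active_right (hx1 i) (hs2 i) (hbi i))
  filter_upwards [hlow, hup, hnn1, hnn2] with t hl hu h1 h2
  exact ⟨fun i => ⟨hl i, hu i⟩, h1, h2, fun i => add_mul_mul_add_mul_eq_zero
    (active_dir_of_comp (hx1 i) (hx2 i) (hcomp i) (hs1 i) (hs2 i) (hbi i)) t⟩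

theorem not_isBStationary_of_eventually_feasible [Fintype ι] [Fintype κ]
    {g0 l u x0 s0 : ι → ℝ} {g1 g2 x1 x2 s1 s2 : κ → ℝ}
    (hfeas : ∀ᶠ t in 𝓝[≥] (0 : ℝ), IsFeasible l u (x0 + t • s0) (x1 + t • s1) (x2 + t • s2))
    (hdesc : g0 ⬝ᵥ s0 + g1 ⬝ᵥ s1 + g2 ⬝ᵥ s2 < 0) :
    ¬ IsBStationary g0 g1 g2 l u x0 x1 x2 := by
  rintro ⟨Δ, hΔ, hmin⟩
  obtain ⟨t, ht, hf, h0, h1, h2⟩ := (eventually_mem_nhdsWithin.and <|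
    (hfeas.filter_mono (nhdsWithin_mono _ Set.Ioi_subset_Ici_self)).and <|
    nhdsWithin_le_nhds <| (eventually_forall_abs_mul_le s0 hΔ).and <|
    (eventually_forall_abs_mul_le s1 hΔ).and (eventually_forall_abs_mul_le s2 hΔ)).exists
  have hobj := hmin _ _ _ hf h0 h1 h2
  simp only [dotProduct_smul, smul_eq_mul, ← mul_add] at hobj
  exact (mul_neg_of_pos_of_neg ht hdesc).not_ge hobj

end MPCC

open MPCC in
theorem stmt_19_general (n0 n1 : ℕ) (l u x0 g0 s0 : Fin n0 → ℝ)
    (x1 x2 g1 g2 s1 s2 : Fin n1 → ℝ) (ε : ℝ) (hε : 0 < ε)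
    (hb : ∀ i, l i ≤ x0 i ∧ x0 i ≤ u i)
    (hx1 : ∀ i, 0 ≤ x1 i) (hx2 : ∀ i, 0 ≤ x2 i) (hcomp : ∀ i, x1 i * x2 i = 0)
    (hdesc : (∑ i, g0 i * s0 i) + (∑ i, g1 i * s1 i) + (∑ i, g2 i * s2 i) ≤ -ε)
    (hs0l : ∀ i, x0 i = l i → 0 ≤ s0 i)
    (hs0u : ∀ i, x0 i = u i → s0 i ≤ 0)
    (hs1 : ∀ i, x1 i = 0 → 0 < x2 i → s1 i = 0)
    (hs2 : ∀ i, x2 i = 0 → 0 < x1 i → s2 i = 0)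
    (hbi : ∀ i, x1 i = 0 → x2 i = 0 →
      (s1 i = 0 ∧ 0 ≤ s2 i) ∨ (0 ≤ s1 i ∧ s2 i = 0)) :
    (∃ t0 : ℝ, 0 < t0 ∧ ∀ t : ℝ, 0 ≤ t → t ≤ t0 →
      (∀ i, l i ≤ x0 i + t * s0 i ∧ x0 i + t * s0 i ≤ u i) ∧
      (∀ i, 0 ≤ x1 i + t * s1 i) ∧ (∀ i, 0 ≤ x2 i + t * s2 i) ∧
      (∀ i, (x1 i + t * s1 i) * (x2 i + t * s2 i) = 0)) ∧
    ¬ ∃ Δ : ℝ, 0 < Δ ∧ ∀ (d0 : Fin n0 → ℝ) (d1 d2 : Fin n1 → ℝ),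
      (∀ i, l i ≤ x0 i + d0 i ∧ x0 i + d0 i ≤ u i) →
      (∀ i, 0 ≤ x1 i + d1 i) → (∀ i, 0 ≤ x2 i + d2 i) →
      (∀ i, (x1 i + d1 i) * (x2 i + d2 i) = 0) →
      (∀ i, |d0 i| ≤ Δ) → (∀ i, |d1 i| ≤ Δ) → (∀ i, |d2 i| ≤ Δ) →
      0 ≤ (∑ i, g0 i * d0 i) + (∑ i, g1 i * d1 i) + (∑ i, g2 i * d2 i) := by
  have hfeas := eventually_isFeasible_add_smul ⟨hb, hx1, hx2, hcomp⟩ hs0l hs0u hs1 hs2 hbi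
  refine ⟨?_, fun ⟨Δ, hΔ, hmin⟩ => ?_⟩
  · obtain ⟨t0, ht0, hIcc⟩ := mem_nhdsGE_iff_exists_Icc_subset.1 hfeas
    exact ⟨t0, ht0, fun t ht htt => hIcc ⟨ht, htt⟩⟩
  · refine not_isBStationary_of_eventually_feasible hfeas
      (lt_of_le_of_lt hdesc (neg_neg_of_pos hε)) ⟨Δ, hΔ, fun d0 d1 d2 hd => ?_⟩
    exact hmin d0 d1 d2 hd.1 hd.2.1 hd.2.2.1 hd.2.2.2

/-- Proposition 4.1 (one direction): the sign conditions make `s` a feasible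
descent direction, so `x + ts` is feasible for small `t ≥ 0` and `x` is not
B-stationary. -/
theorem stmt_19 (n0 n1 : ℕ) (l u x0 g0 s0 : Fin n0 → ℝ)
    (x1 x2 g1 g2 s1 s2 : Fin n1 → ℝ) (ε : ℝ) (hε : 0 < ε)
    (hlu : ∀ i, l i < u i)
    (hb : ∀ i, l i ≤ x0 i ∧ x0 i ≤ u i)
    (hx1 : ∀ i, 0 ≤ x1 i) (hx2 : ∀ i, 0 ≤ x2 i) (hcomp : ∀ i, x1 i * x2 i = 0)
    (hsnorm : max ‖s0‖ (max ‖s1‖ ‖s2‖) = 1)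
    (hdesc : (∑ i, g0 i * s0 i) + (∑ i, g1 i * s1 i) + (∑ i, g2 i * s2 i) ≤ -ε)
    (hs0l : ∀ i, x0 i = l i → 0 ≤ s0 i)
    (hs0u : ∀ i, x0 i = u i → s0 i ≤ 0)
    (hs1 : ∀ i, x1 i = 0 → 0 < x2 i → s1 i = 0)
    (hs2 : ∀ i, x2 i = 0 → 0 < x1 i → s2 i = 0)
    (hbi : ∀ i, x1 i = 0 → x2 i = 0 →
      (s1 i = 0 ∧ 0 ≤ s2 i) ∨ (0 ≤ s1 i ∧ s2 i = 0)) :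
    (∃ t0 : ℝ, 0 < t0 ∧ ∀ t : ℝ, 0 ≤ t → t ≤ t0 →
      (∀ i, l i ≤ x0 i + t * s0 i ∧ x0 i + t * s0 i ≤ u i) ∧
      (∀ i, 0 ≤ x1 i + t * s1 i) ∧ (∀ i, 0 ≤ x2 i + t * s2 i) ∧
      (∀ i, (x1 i + t * s1 i) * (x2 i + t * s2 i) = 0)) ∧
    ¬ ∃ Δ : ℝ, 0 < Δ ∧ ∀ (d0 : Fin n0 → ℝ) (d1 d2 : Fin n1 → ℝ),
      (∀ i, l i ≤ x0 i + d0 i ∧ x0 i + d0 i ≤ u i) →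
      (∀ i, 0 ≤ x1 i + d1 i) → (∀ i, 0 ≤ x2 i + d2 i) →
      (∀ i, (x1 i + d1 i) * (x2 i + d2 i) = 0) →
      (∀ i, |d0 i| ≤ Δ) → (∀ i, |d1 i| ≤ Δ) → (∀ i, |d2 i| ≤ Δ) →
      0 ≤ (∑ i, g0 i * d0 i) + (∑ i, g1 i * d1 i) + (∑ i, g2 i * d2 i) :=
  stmt_19_general n0 n1 l u x0 g0 s0 x1 x2 g1 g2 s1 s2 ε hε hb hx1 hx2 hcomp hdesc hs0l hs0u hs1 hs2
    hbi
end
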